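/- arXiv:2212.01966 — 7 statements merged into one kernel-verified Lean document; each statement's English description precedes it below -/
import Mathlib

section
/- If A is an n×n complex matrix with ρ(Ā·A) < 1, then for every Hermitian matrix X the conjugate Stein equation C_A(X) := X − A^H X̄ A has the explicit series solution, and the inverse operator C_A^{-1} is order preserving: if X ≥ Y (in the Loewner order on Hermitian matrices), then C_A^{-1}(X) ≥ C_A^{-1}(Y). -/
open Matrix
open scoped ComplexOrder

noncomputable section

/-- Entrywise complex conjugation of a matrix. -/
def mconj {k l : ℕ} (M : Matrix (Fin k) (Fin l) ℂ) : Matrix (Fin k) (Fin l) ℂ :=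
  M.map (starRingEnd ℂ)

/-- The explicit series `∑ₖ ((ĀA)^k)ᴴ (X + Aᴴ X̄ A)(ĀA)^k` for the inverse of the
conjugate Stein operator `C_A(X) = X - Aᴴ X̄ A`. -/
def steinInv {n : ℕ} (A X : Matrix (Fin n) (Fin n) ℂ) : Matrix (Fin n) (Fin n) ℂ :=
  ∑' k : ℕ, ((mconj A * A) ^ k)ᴴ * (X + Aᴴ * mconj X * A) * (mconj A * A) ^ k

/-!
Write `B = ĀA`, `Φ(N) = Aᴴ N̄ A` and `S_j(N) = (Bʲ)ᴴ N Bʲ`, so that `C_A⁻¹(X) = ∑ⱼ S_j(X + Φ X)`.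
From `A B = B̄ A` one gets `Φ ∘ S_j = S_j ∘ Φ`, and `Φ ∘ Φ = S_1`. Applying `Φ` to the series
therefore reproduces its `Φ X` part and shifts its `X` part by one index, so the series minus
its image under `Φ` telescopes to `S_0 X = X`. Summability comes from Gelfand's formula:
`ρ(B) < 1` gives `‖Bʲ‖ ≤ rʲ` eventually, for some `r < 1`. Finally `C_A⁻¹` is additive and
every term `S_j(Z + Φ Z)` is positive semidefinite when `Z` is, so monotonicity follows from
closedness of the positive semidefinite cone.
-/

open Filter
open scoped NNReal

section SpectralRadius

variable {𝔸 : Type*} [NormedRing 𝔸] [NormedAlgebra ℂ 𝔸] [CompleteSpace 𝔸]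

theorem spectralRadius_lt_one_of_forall_norm_lt_one {a : 𝔸}
    (h : ∀ z ∈ spectrum ℂ a, ‖z‖ < 1) : spectralRadius ℂ a < 1 := by
  cases subsingleton_or_nontrivial 𝔸 with
  | inl _ => simp [spectralRadius, spectrum.of_subsingleton]
  | inr _ =>
    simpa using spectrum.spectralRadius_lt_of_forall_lt a (r := 1) fun z hz ↦
      (by simpa [← NNReal.coe_lt_coe] using h z hz)

theorem exists_norm_pow_le_of_spectralRadius_lt_one {a : 𝔸} (ha : spectralRadius ℂ a < 1) :
    ∃ r : ℝ≥0, r < 1 ∧ ∀ᶠ k : ℕ in atTop, ‖a ^ k‖ ≤ r ^ k := by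
  obtain ⟨r, hρr, hr⟩ := ENNReal.lt_iff_exists_nnreal_btwn.mp ha
  refine ⟨r, mod_cast hr, ?_⟩
  filter_upwards [(spectrum.pow_norm_pow_one_div_tendsto_nhds_spectralRadius a).eventually_lt_const
    hρr, eventually_ne_atTop 0] with k hk hk0
  have hroot : ‖a ^ k‖ ^ (1 / k : ℝ) < r := by
    simpa using (ENNReal.ofReal_lt_iff_lt_toReal (by positivity) ENNReal.coe_ne_top).mp hk
  calc ‖a ^ k‖ = (‖a ^ k‖ ^ (1 / k : ℝ)) ^ k := by
        rw [one_div, Real.rpow_inv_natCast_pow (norm_nonneg _) hk0]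
    _ ≤ r ^ k := by gcongr

theorem summable_star_pow_mul_mul_pow [StarRing 𝔸] [NormedStarGroup 𝔸] {a : 𝔸}
    (ha : spectralRadius ℂ a < 1) (b : 𝔸) : Summable fun k : ℕ ↦ star (a ^ k) * b * a ^ k := by
  obtain ⟨r, hr, hbound⟩ := exists_norm_pow_le_of_spectralRadius_lt_one ha
  have hr2 : (r : ℝ) ^ 2 < 1 := pow_lt_one₀ r.coe_nonneg (mod_cast hr) two_ne_zero
  refine Summable.of_norm_bounded_eventually_nat
    ((summable_geometric_of_lt_one (by positivity) hr2).mul_left ‖b‖) ?_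
  filter_upwards [hbound] with k hk
  calc ‖star (a ^ k) * b * a ^ k‖ ≤ ‖a ^ k‖ * ‖b‖ * ‖a ^ k‖ := by
        simpa only [norm_star] using norm_mul₃_le (a := star (a ^ k)) (b := b) (c := a ^ k)
    _ ≤ r ^ k * ‖b‖ * r ^ k := by gcongr
    _ = ‖b‖ * (r ^ 2) ^ k := by ring

end SpectralRadius

section SandwichPow

variable {ι : Type*} [Fintype ι] [DecidableEq ι]

def sandwichPow (B N : Matrix ι ι ℂ) (j : ℕ) : Matrix ι ι ℂ :=
  (B ^ j)ᴴ * N * B ^ j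

@[simp]
theorem sandwichPow_zero (B N : Matrix ι ι ℂ) : sandwichPow B N 0 = N := by
  simp [sandwichPow]

theorem sandwichPow_add (B M N : Matrix ι ι ℂ) (j : ℕ) :
    sandwichPow B (M + N) j = sandwichPow B M j + sandwichPow B N j := by
  simp only [sandwichPow, mul_add, add_mul]

theorem sandwichPow_sub (B M N : Matrix ι ι ℂ) (j : ℕ) :
    sandwichPow B (M - N) j = sandwichPow B M j - sandwichPow B N j := by
  simp only [sandwichPow, mul_sub, sub_mul]

theorem Matrix.PosSemidef.sandwichPow {N : Matrix ι ι ℂ} (hN : N.PosSemidef) (B : Matrix ι ι ℂ)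
    (j : ℕ) : (sandwichPow B N j).PosSemidef :=
  hN.conjTranspose_mul_mul_same _

-- The L2 operator norm satisfies `‖Mᴴ‖ = ‖M‖` and induces the product topology on matrices.
open scoped Matrix.Norms.L2Operator in
theorem summable_sandwichPow {B : Matrix ι ι ℂ} (hB : ∀ μ ∈ spectrum ℂ B, ‖μ‖ < 1)
    (N : Matrix ι ι ℂ) : Summable (sandwichPow B N) :=
  summable_star_pow_mul_mul_pow (spectralRadius_lt_one_of_forall_norm_lt_one hB) N

end SandwichPow

section Conj

variable {k l m : ℕ}

@[simp]
theorem mconj_mconj (M : Matrix (Fin k) (Fin l) ℂ) : mconj (mconj M) = M := by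
  ext; simp [mconj]

theorem mconj_add (M N : Matrix (Fin k) (Fin l) ℂ) : mconj (M + N) = mconj M + mconj N :=
  Matrix.map_add _ (map_add _) M N

theorem mconj_sub (M N : Matrix (Fin k) (Fin l) ℂ) : mconj (M - N) = mconj M - mconj N :=
  Matrix.map_sub _ (map_sub _) M N

theorem mconj_mul (M : Matrix (Fin k) (Fin l) ℂ) (N : Matrix (Fin l) (Fin m) ℂ) :
    mconj (M * N) = mconj M * mconj N :=
  Matrix.map_mul

theorem mconj_pow (M : Matrix (Fin k) (Fin k) ℂ) (j : ℕ) : mconj (M ^ j) = mconj M ^ j :=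
  map_pow (starRingEnd ℂ).mapMatrix M j

theorem mconj_conjTranspose (M : Matrix (Fin k) (Fin l) ℂ) : mconj Mᴴ = (mconj M)ᴴ := by
  ext; simp [mconj]

theorem continuous_mconj : Continuous (mconj : Matrix (Fin k) (Fin l) ℂ → _) :=
  continuous_id.matrix_map continuous_star

theorem Matrix.PosSemidef.mconj {M : Matrix (Fin k) (Fin k) ℂ} (hM : M.PosSemidef) :
    (mconj M).PosSemidef := by
  have : _root_.mconj M = Mᴴᵀ := by ext; simp [_root_.mconj]
  rw [this, hM.isHermitian.eq]
  exact hM.transpose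

end Conj

section Stein

variable {n : ℕ}

def conjSandwich (A : Matrix (Fin n) (Fin n) ℂ) :
    Matrix (Fin n) (Fin n) ℂ →+ Matrix (Fin n) (Fin n) ℂ where
  toFun N := Aᴴ * mconj N * A
  map_zero' := by simp [mconj]
  map_add' M N := by simp [mconj_add, mul_add, add_mul]

variable (A : Matrix (Fin n) (Fin n) ℂ)

@[simp]
theorem conjSandwich_apply (N : Matrix (Fin n) (Fin n) ℂ) :
    conjSandwich A N = Aᴴ * mconj N * A := rfl

theorem continuous_conjSandwich : Continuous (conjSandwich A) :=
  (continuous_const.matrix_mul continuous_mconj).matrix_mul continuous_const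

theorem steinInv_eq_tsum (X : Matrix (Fin n) (Fin n) ℂ) :
    steinInv A X = ∑' j, sandwichPow (mconj A * A) (X + conjSandwich A X) j := rfl

theorem mconj_pow_mul_self (j : ℕ) :
    mconj ((mconj A * A) ^ j) * A = A * (mconj A * A) ^ j := by
  have : SemiconjBy A (mconj A * A) (A * mconj A) := (mul_assoc _ _ _).symm
  rw [mconj_pow, mconj_mul, mconj_mconj]
  exact ((this.pow_right j).eq).symm

theorem conjSandwich_sandwichPow (N : Matrix (Fin n) (Fin n) ℂ) (j : ℕ) :
    conjSandwich A (sandwichPow (mconj A * A) N j)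
      = sandwichPow (mconj A * A) (conjSandwich A N) j := by
  calc conjSandwich A (sandwichPow (mconj A * A) N j)
      = (mconj ((mconj A * A) ^ j) * A)ᴴ * mconj N * (mconj ((mconj A * A) ^ j) * A) := by
        simp only [conjSandwich_apply, sandwichPow, mconj_mul, mconj_conjTranspose,
          conjTranspose_mul, mul_assoc]
    _ = sandwichPow (mconj A * A) (conjSandwich A N) j := by
        simp only [mconj_pow_mul_self, sandwichPow, conjSandwich_apply, conjTranspose_mul,
          mul_assoc]

theorem sandwichPow_conjSandwich_conjSandwich (N : Matrix (Fin n) (Fin n) ℂ) (j : ℕ) :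
    sandwichPow (mconj A * A) (conjSandwich A (conjSandwich A N)) j
      = sandwichPow (mconj A * A) N (j + 1) := by
  simp only [sandwichPow, conjSandwich_apply, mconj_mul, mconj_conjTranspose, mconj_mconj,
    conjTranspose_mul, pow_succ', mul_assoc]

theorem steinInv_sub_conjSandwich (hρ : ∀ μ ∈ spectrum ℂ (mconj A * A), ‖μ‖ < 1)
    (X : Matrix (Fin n) (Fin n) ℂ) : steinInv A X - conjSandwich A (steinInv A X) = X := by
  have hS := summable_sandwichPow hρ
  let S := sandwichPow (mconj A * A)
  calc steinInv A X - conjSandwich A (steinInv A X)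
      = (∑' j, S X j + ∑' j, S (conjSandwich A X) j)
          - (∑' j, S (conjSandwich A X) j + ∑' j, S X (j + 1)) := by
        rw [steinInv_eq_tsum, (hS _).map_tsum _ (continuous_conjSandwich A),
          ← (hS _).tsum_add (hS _), ← (hS _).tsum_add ((summable_nat_add_iff 1).2 (hS X))]
        simp only [conjSandwich_sandwichPow, map_add, sandwichPow_add,
          sandwichPow_conjSandwich_conjSandwich]
    _ = S X 0 := by rw [(hS X).tsum_eq_zero_add]; abel
    _ = X := sandwichPow_zero _ X

theorem steinInv_sub (hρ : ∀ μ ∈ spectrum ℂ (mconj A * A), ‖μ‖ < 1)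
    (X Y : Matrix (Fin n) (Fin n) ℂ) : steinInv A (X - Y) = steinInv A X - steinInv A Y := by
  have hS := summable_sandwichPow hρ
  simp only [steinInv_eq_tsum, ← (hS _).tsum_sub (hS _), ← sandwichPow_sub, map_sub,
    add_sub_add_comm]

open scoped MatrixOrder Matrix.Norms.L2Operator in
theorem Matrix.PosSemidef.steinInv {X : Matrix (Fin n) (Fin n) ℂ} (hX : X.PosSemidef) :
    (steinInv A X).PosSemidef := by
  rw [← nonneg_iff_posSemidef, steinInv_eq_tsum]
  exact tsum_nonneg fun j ↦ nonneg_iff_posSemidef.2 <|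
    (hX.add (hX.mconj.conjTranspose_mul_mul_same A)).sandwichPow _ j

end Stein

theorem stmt0 (n : ℕ) (A : Matrix (Fin n) (Fin n) ℂ)
    (hρ : ∀ μ ∈ spectrum ℂ (mconj A * A), ‖μ‖ < 1) :
    (∀ X : Matrix (Fin n) (Fin n) ℂ, X.IsHermitian →
      steinInv A X - Aᴴ * mconj (steinInv A X) * A = X) ∧
    (∀ X Y : Matrix (Fin n) (Fin n) ℂ, X.IsHermitian → Y.IsHermitian →
      (X - Y).PosSemidef → (steinInv A X - steinInv A Y).PosSemidef) :=
  ⟨fun X _ ↦ steinInv_sub_conjSandwich A hρ X,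
    fun X Y _ _ hXY ↦ steinInv_sub A hρ X Y ▸ hXY.steinInv A⟩
end
end

section
/- For any F ∈ ℂ^{m×n} and any Hermitian X with R_X := R + B^H X̄ B invertible, the identity X − R(X) = C_{A_F}(X) − H_F + K_F(X) holds, where A_F = A − BF, C_{A_F}(X) = X − A_F^H X̄ A_F, H_F = H + F^H R F, F_X = R_X^{-1} B^H X̄ A, and K_F(X) = (F − F_X)^H R_X (F − F_X). -/
open Matrix
open scoped ComplexOrder

noncomputable section

variable {n m : ℕ}

/-- `R_X = R + Bᴴ X̄ B`. -/
def Rx (B : Matrix (Fin n) (Fin m) ℂ) (R : Matrix (Fin m) (Fin m) ℂ)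
    (X : Matrix (Fin n) (Fin n) ℂ) : Matrix (Fin m) (Fin m) ℂ :=
  R + Bᴴ * mconj X * B

/-- The CDARE operator `R(X) = Aᴴ X̄ A − Aᴴ X̄ B R_X⁻¹ Bᴴ X̄ A + H`. -/
def Ric (A : Matrix (Fin n) (Fin n) ℂ) (B : Matrix (Fin n) (Fin m) ℂ)
    (R : Matrix (Fin m) (Fin m) ℂ) (H X : Matrix (Fin n) (Fin n) ℂ) :
    Matrix (Fin n) (Fin n) ℂ :=
  Aᴴ * mconj X * A - Aᴴ * mconj X * B * (Rx B R X)⁻¹ * (Bᴴ * mconj X * A) + H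

/-- `F_X = R_X⁻¹ Bᴴ X̄ A`. -/
def Fx (A : Matrix (Fin n) (Fin n) ℂ) (B : Matrix (Fin n) (Fin m) ℂ)
    (R : Matrix (Fin m) (Fin m) ℂ) (X : Matrix (Fin n) (Fin n) ℂ) :
    Matrix (Fin m) (Fin n) ℂ :=
  (Rx B R X)⁻¹ * (Bᴴ * mconj X * A)

/-- `T_X = A − B F_X`. -/
def Tx (A : Matrix (Fin n) (Fin n) ℂ) (B : Matrix (Fin n) (Fin m) ℂ)
    (R : Matrix (Fin m) (Fin m) ℂ) (X : Matrix (Fin n) (Fin n) ℂ) :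
    Matrix (Fin n) (Fin n) ℂ :=
  A - B * Fx A B R X

theorem stmt3 (n m : ℕ) (A : Matrix (Fin n) (Fin n) ℂ) (B : Matrix (Fin n) (Fin m) ℂ)
    (R : Matrix (Fin m) (Fin m) ℂ) (H X : Matrix (Fin n) (Fin n) ℂ)
    (F : Matrix (Fin m) (Fin n) ℂ)
    (hR : R.IsHermitian) (hRu : IsUnit R) (hH : H.IsHermitian) (hX : X.IsHermitian)
    (hRx : IsUnit (Rx B R X)) :
    X - Ric A B R H X =
      (X - (A - B * F)ᴴ * mconj X * (A - B * F)) - (H + Fᴴ * R * F) +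
        (F - Fx A B R X)ᴴ * Rx B R X * (F - Fx A B R X) := by
  set Y := mconj X with hYdef
  have hY : Yᴴ = Y := by
    ext i j
    have := congrFun (congrFun hX.eq j) i
    simpa [hYdef, mconj, Matrix.conjTranspose_apply, Matrix.map_apply] using this.symm
  set S := Rx B R X with hSdef
  have hS : Sᴴ = S := by
    simp only [hSdef, Rx, conjTranspose_add, conjTranspose_mul,
      conjTranspose_conjTranspose, ← hYdef, hY, hR.eq]
    rw [Matrix.mul_assoc]
  have hdet : IsUnit S.det := (Matrix.isUnit_iff_isUnit_det S).mp hRx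
  set G := Fx A B R X with hGdef
  have hSG : S * G = Bᴴ * Y * A := by
    rw [hGdef, Fx, ← hSdef, ← hYdef, ← Matrix.mul_assoc, Matrix.mul_nonsing_inv _ hdet,
      Matrix.one_mul]
  have hSinv : S⁻¹ᴴ = S⁻¹ := by rw [Matrix.conjTranspose_nonsing_inv, hS]
  have hGH : Gᴴ = Aᴴ * Y * B * S⁻¹ := by
    rw [hGdef, Fx, ← hSdef, ← hYdef, conjTranspose_mul, hSinv, conjTranspose_mul,
      conjTranspose_mul, conjTranspose_conjTranspose, hY]
    rw [Matrix.mul_assoc Aᴴ Y B]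
  have hGS : Gᴴ * S = Aᴴ * Y * B := by
    rw [hGH, Matrix.mul_assoc (Aᴴ * Y * B) S⁻¹ S, Matrix.nonsing_inv_mul _ hdet,
      Matrix.mul_one]
  have key : (F - G)ᴴ * S * (F - G)
      = Fᴴ * S * F - Fᴴ * (Bᴴ * Y * A) - Aᴴ * Y * B * F
        + Aᴴ * Y * B * (S⁻¹ * (Bᴴ * Y * A)) := by
    rw [conjTranspose_sub, Matrix.sub_mul, Matrix.sub_mul, Matrix.mul_sub, Matrix.mul_sub,
      hGS, Matrix.mul_assoc Fᴴ S G, hSG, hGdef, Fx, ← hSdef, ← hYdef]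
    abel
  rw [key, Ric, ← hYdef, ← hSdef]
  simp only [hSdef, Rx, ← hYdef, conjTranspose_sub, conjTranspose_mul, Matrix.sub_mul,
    Matrix.mul_sub, Matrix.add_mul, Matrix.mul_add, Matrix.mul_assoc]
  abel
end
end

section
/- For any Hermitian matrices X, Y with R_X and R_Y invertible, the identity X − R(X) = C_{T_Y}(X) − H_{F_Y} + K(Y,X) holds, where T_Y = A − B F_Y, F_Y = R_Y^{-1} B^H Ȳ A, H_{F_Y} = H + F_Y^H R F_Y, C_{T_Y}(X) = X − T_Y^H X̄ T_Y, and K(Y,X) = (F_Y − F_X)^H R_X (F_Y − F_X). -/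
open Matrix
open scoped ComplexOrder

noncomputable section

variable {n m : ℕ}

lemma aux {n m : ℕ} (A X H M : Matrix (Fin n) (Fin n) ℂ) (B : Matrix (Fin n) (Fin m) ℂ)
    (R S : Matrix (Fin m) (Fin m) ℂ) (F G : Matrix (Fin m) (Fin n) ℂ)
    (k1 : Bᴴ * (M * A) = S * F)
    (k2 : ∀ Z : Matrix (Fin m) (Fin n) ℂ, Aᴴ * (M * (B * Z)) = Fᴴ * (S * Z))
    (k3 : ∀ Z : Matrix (Fin m) (Fin n) ℂ, Bᴴ * (M * (B * Z)) = S * Z - R * Z) :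
    X - (Aᴴ * M * A - Aᴴ * M * B * F + H) =
      (X - (A - B * G)ᴴ * M * (A - B * G)) - (H + Gᴴ * R * G) +
        (G - F)ᴴ * S * (G - F) := by
  simp only [conjTranspose_sub, conjTranspose_mul, Matrix.sub_mul, Matrix.mul_sub,
    Matrix.add_mul, Matrix.mul_add, Matrix.mul_assoc, k1, k2, k3]
  abel

theorem stmt4 (n m : ℕ) (A : Matrix (Fin n) (Fin n) ℂ) (B : Matrix (Fin n) (Fin m) ℂ)
    (R : Matrix (Fin m) (Fin m) ℂ) (H X Y : Matrix (Fin n) (Fin n) ℂ)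
    (hR : R.IsHermitian) (hRu : IsUnit R) (hH : H.IsHermitian)
    (hX : X.IsHermitian) (hY : Y.IsHermitian)
    (hRx : IsUnit (Rx B R X)) (hRy : IsUnit (Rx B R Y)) :
    X - Ric A B R H X =
      (X - (Tx A B R Y)ᴴ * mconj X * Tx A B R Y) - (H + (Fx A B R Y)ᴴ * R * Fx A B R Y) +
        (Fx A B R Y - Fx A B R X)ᴴ * Rx B R X * (Fx A B R Y - Fx A B R X) := by
  have hdet : IsUnit (Rx B R X).det := (Matrix.isUnit_iff_isUnit_det _).1 hRx
  have hM : (mconj X)ᴴ = mconj X := by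
    ext i j
    simp [mconj, conjTranspose_apply, ← hX.apply j i]
  have hS : (Rx B R X)ᴴ = Rx B R X := by
    rw [Rx]
    simp only [conjTranspose_add, conjTranspose_mul, conjTranspose_conjTranspose, hM, hR.eq,
      Matrix.mul_assoc]
  have k1 : Bᴴ * (mconj X * A) = Rx B R X * Fx A B R X := by
    rw [Fx, ← Matrix.mul_assoc (Rx B R X), Matrix.mul_nonsing_inv _ hdet, Matrix.one_mul,
      Matrix.mul_assoc]
  have h2' : Aᴴ * mconj X * B = (Fx A B R X)ᴴ * Rx B R X := by
    have := congrArg conjTranspose k1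
    simpa only [conjTranspose_mul, conjTranspose_conjTranspose, hM, hS,
      ← Matrix.mul_assoc] using this
  have k2 : ∀ Z : Matrix (Fin m) (Fin n) ℂ,
      Aᴴ * (mconj X * (B * Z)) = (Fx A B R X)ᴴ * (Rx B R X * Z) := by
    intro Z
    rw [← Matrix.mul_assoc, ← Matrix.mul_assoc, h2', Matrix.mul_assoc]
  have h3 : Bᴴ * mconj X * B = Rx B R X - R := by
    rw [Rx]; abel
  have k3 : ∀ Z : Matrix (Fin m) (Fin n) ℂ,
      Bᴴ * (mconj X * (B * Z)) = Rx B R X * Z - R * Z := by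
    intro Z
    rw [← Matrix.mul_assoc, ← Matrix.mul_assoc, h3, Matrix.sub_mul]
  have hric : Ric A B R H X
      = Aᴴ * mconj X * A - Aᴴ * mconj X * B * Fx A B R X + H := by
    rw [Ric, Fx, Matrix.mul_assoc (Aᴴ * mconj X * B)]
  rw [hric, Tx]
  exact aux A X H (mconj X) B R (Rx B R X) (Fx A B R X) (Fx A B R Y) k1 k2 k3
end
end

section
/- Suppose X is Hermitian with R_X invertible, F ∈ ℂ^{m×n} satisfies ρ(Ā_F A_F) < 1 with A_F = A − BF, and there exists a positive semidefinite Hermitian Y with C_{T_X}(Y) ≥ K_F(X), where T_X = A − BF_X. If in addition R_X > 0 (so K_F(X) ≥ 0), then ρ(T̄_X T_X) < 1. -/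
open Matrix
open scoped ComplexOrder

noncomputable section

variable {n m : ℕ}

/-! If `T̄_X T_X x = μ x` with `|μ| ≥ 1`, put `y = conj (T_X x)`; then `conj (T_X y) = μ x`.
Evaluating the Stein inequality `Y - T_Xᴴ Ȳ T_X ≥ K_F(X)` at `x` and at `y` and adding gives
`(1 - |μ|²) x*Yx ≥ x*K_F(X)x + y*K_F(X)y ≥ 0`, so both quadratic forms of `K_F(X)` vanish. Since
`R_X > 0`, `F - F_X` kills `x` and `y`, so `A_F = T_X - B(F - F_X)` agrees with `T_X` on them and
`μ` is an eigenvalue of `Ā_F A_F` as well, contradicting `ρ(Ā_F A_F) < 1`. -/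

theorem Matrix.mem_spectrum_iff_exists_mulVec_eq_smul {ι 𝕜 : Type*} [Fintype ι] [DecidableEq ι]
    [Field 𝕜] (N : Matrix ι ι 𝕜) (μ : 𝕜) :
    μ ∈ spectrum 𝕜 N ↔ ∃ v ≠ 0, N *ᵥ v = μ • v := by
  rw [← spectrum_toLin', ← Module.End.hasEigenvalue_iff_mem_spectrum]
  constructor
  · intro h
    obtain ⟨v, hv⟩ := h.exists_hasEigenvector
    exact ⟨v, hv.2, hv.apply_eq_smul⟩
  · rintro ⟨v, hv0, hv⟩
    exact Module.End.hasEigenvalue_of_hasEigenvector ⟨Module.End.mem_eigenspace_iff.2 hv, hv0⟩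

theorem Matrix.star_dotProduct_conjTranspose_mul_mul_mulVec {ι κ R : Type*} [Fintype ι]
    [Fintype κ] [CommSemiring R] [StarRing R] (M : Matrix κ ι R) (P : Matrix κ κ R) (v : ι → R) :
    star v ⬝ᵥ (Mᴴ * P * M) *ᵥ v = star (M *ᵥ v) ⬝ᵥ P *ᵥ (M *ᵥ v) := by
  rw [star_mulVec, ← dotProduct_mulVec, ← mulVec_mulVec, ← mulVec_mulVec]

theorem Matrix.PosDef.mulVec_eq_zero_of_star_dotProduct_conjTranspose_mul_mul_mulVec_eq_zero
    {ι κ R : Type*} [Fintype ι] [Fintype κ] [CommRing R] [PartialOrder R] [StarRing R]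
    {P : Matrix κ κ R} (hP : P.PosDef) (M : Matrix κ ι R) {v : ι → R}
    (h : star v ⬝ᵥ (Mᴴ * P * M) *ᵥ v = 0) : M *ᵥ v = 0 := by
  by_contra hMv
  have := hP.dotProduct_mulVec_pos hMv
  rw [← star_dotProduct_conjTranspose_mul_mul_mulVec, h] at this
  exact lt_irrefl 0 this

theorem mconj_mulVec_star {k l : ℕ} (M : Matrix (Fin k) (Fin l) ℂ) (v : Fin l → ℂ) :
    mconj M *ᵥ star v = star (M *ᵥ v) := by
  ext i
  simp [mconj, mulVec, dotProduct, star_sum]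

theorem mconj_mul_mulVec {k : ℕ} (S T : Matrix (Fin k) (Fin k) ℂ) (v : Fin k → ℂ) :
    (mconj S * T) *ᵥ v = star (S *ᵥ star (T *ᵥ v)) := by
  rw [← mulVec_mulVec, ← mconj_mulVec_star, star_star]

theorem mconj_mul_self_mulVec_congr {k : ℕ} {S T : Matrix (Fin k) (Fin k) ℂ} {v : Fin k → ℂ}
    (h₁ : S *ᵥ v = T *ᵥ v) (h₂ : S *ᵥ star (T *ᵥ v) = T *ᵥ star (T *ᵥ v)) :
    (mconj S * S) *ᵥ v = (mconj T * T) *ᵥ v := by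
  rw [mconj_mul_mulVec, mconj_mul_mulVec, h₁, h₂]

theorem Matrix.IsHermitian.star_dotProduct_conjTranspose_mul_mconj_mul_mulVec {k l : ℕ}
    {Y : Matrix (Fin k) (Fin k) ℂ} (hY : Y.IsHermitian) (T : Matrix (Fin k) (Fin l) ℂ)
    (v : Fin l → ℂ) :
    star v ⬝ᵥ (Tᴴ * mconj Y * T) *ᵥ v = star (star (T *ᵥ v)) ⬝ᵥ Y *ᵥ star (T *ᵥ v) := by
  obtain ⟨w, hw⟩ : ∃ w, T *ᵥ v = star w := ⟨star (T *ᵥ v), (star_star _).symm⟩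
  rw [star_dotProduct_conjTranspose_mul_mul_mulVec, hw, star_star, mconj_mulVec_star,
    dotProduct_star, dotProduct_comm, RCLike.star_def, RCLike.conj_eq_iff_im]
  exact hY.im_star_dotProduct_mulVec_self w

section SteinInequality

variable {k : ℕ} {Y K T : Matrix (Fin k) (Fin k) ℂ}

theorem star_dotProduct_mulVec_conj_add_le (hY : Y.IsHermitian)
    (hYK : (Y - Tᴴ * mconj Y * T - K).PosSemidef) (v : Fin k → ℂ) :
    star (star (T *ᵥ v)) ⬝ᵥ Y *ᵥ star (T *ᵥ v) + star v ⬝ᵥ K *ᵥ v ≤ star v ⬝ᵥ Y *ᵥ v := by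
  have h := hYK.dotProduct_mulVec_nonneg v
  rw [sub_mulVec, sub_mulVec, dotProduct_sub, dotProduct_sub,
    hY.star_dotProduct_conjTranspose_mul_mconj_mul_mulVec, sub_sub, sub_nonneg] at h
  exact h

theorem star_dotProduct_mulVec_eq_zero_of_mconj_mul_self_mulVec_eq_smul (hY : Y.PosSemidef)
    (hK : K.PosSemidef) (hYK : (Y - Tᴴ * mconj Y * T - K).PosSemidef) {μ : ℂ} (hμ : 1 ≤ ‖μ‖)
    {x : Fin k → ℂ} (hx : (mconj T * T) *ᵥ x = μ • x) :
    star x ⬝ᵥ K *ᵥ x = 0 ∧ star (star (T *ᵥ x)) ⬝ᵥ K *ᵥ star (T *ᵥ x) = 0 := by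
  set y := star (T *ᵥ x)
  have hy : star (T *ᵥ y) = μ • x := by rw [← hx, mconj_mul_mulVec]
  have h₁ := star_dotProduct_mulVec_conj_add_le hY.isHermitian hYK x
  have h₂ := star_dotProduct_mulVec_conj_add_le hY.isHermitian hYK y
  rw [hy] at h₂
  have hμx : star (μ • x) ⬝ᵥ Y *ᵥ (μ • x) = Complex.normSq μ * (star x ⬝ᵥ Y *ᵥ x) := by
    rw [star_smul, mulVec_smul, dotProduct_smul, smul_dotProduct, smul_eq_mul, smul_eq_mul,
      ← mul_assoc, Complex.star_def, Complex.mul_conj]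
  have hμ' : (1 : ℂ) ≤ Complex.normSq μ := by
    rw [Complex.normSq_eq_norm_sq]
    exact_mod_cast one_le_pow₀ hμ
  have hsum : star x ⬝ᵥ K *ᵥ x + star y ⬝ᵥ K *ᵥ y ≤ 0 := calc
    _ ≤ (star x ⬝ᵥ Y *ᵥ x - star y ⬝ᵥ Y *ᵥ y) +
        (star y ⬝ᵥ Y *ᵥ y - Complex.normSq μ * (star x ⬝ᵥ Y *ᵥ x)) :=
      add_le_add (le_sub_iff_add_le'.2 h₁) (le_sub_iff_add_le'.2 (hμx ▸ h₂))
    _ = -((Complex.normSq μ - 1) * (star x ⬝ᵥ Y *ᵥ x)) := by ring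
    _ ≤ 0 := neg_nonpos.2 (mul_nonneg (sub_nonneg.2 hμ') (hY.dotProduct_mulVec_nonneg x))
  have hKx := hK.dotProduct_mulVec_nonneg x
  have hKy := hK.dotProduct_mulVec_nonneg y
  exact (add_eq_zero_iff_of_nonneg hKx hKy).1 (le_antisymm hsum (add_nonneg hKx hKy))

end SteinInequality

theorem stmt5_general (n m : ℕ) (A : Matrix (Fin n) (Fin n) ℂ) (B : Matrix (Fin n) (Fin m) ℂ)
    (R : Matrix (Fin m) (Fin m) ℂ) (X : Matrix (Fin n) (Fin n) ℂ)
    (F : Matrix (Fin m) (Fin n) ℂ)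
    (hF : ∀ μ ∈ spectrum ℂ (mconj (A - B * F) * (A - B * F)), ‖μ‖ < 1)
    (hY : ∃ Y : Matrix (Fin n) (Fin n) ℂ, Y.PosSemidef ∧
      ((Y - (Tx A B R X)ᴴ * mconj Y * Tx A B R X) -
        (F - Fx A B R X)ᴴ * Rx B R X * (F - Fx A B R X)).PosSemidef)
    (hRxpos : (Rx B R X).PosDef) :
    ∀ μ ∈ spectrum ℂ (mconj (Tx A B R X) * Tx A B R X), ‖μ‖ < 1 := by
  intro μ hμ
  by_contra! hμ1
  obtain ⟨Y, hY, hYK⟩ := hY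
  obtain ⟨x, hx0, hx⟩ := (mem_spectrum_iff_exists_mulVec_eq_smul _ μ).1 hμ
  set T := Tx A B R X
  set M := F - Fx A B R X
  have hAF : A - B * F = T - B * M := by
    simp only [T, M, Tx, Matrix.mul_sub]
    abel
  have hagree (v : Fin n → ℂ) (hv : star v ⬝ᵥ (Mᴴ * Rx B R X * M) *ᵥ v = 0) :
      (A - B * F) *ᵥ v = T *ᵥ v := by
    rw [hAF, sub_mulVec, ← mulVec_mulVec,
      hRxpos.mulVec_eq_zero_of_star_dotProduct_conjTranspose_mul_mul_mulVec_eq_zero M hv,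
      mulVec_zero, sub_zero]
  obtain ⟨hKx, hKy⟩ := star_dotProduct_mulVec_eq_zero_of_mconj_mul_self_mulVec_eq_smul hY
    (hRxpos.posSemidef.conjTranspose_mul_mul_same M) hYK hμ1 hx
  have hxF : (mconj (A - B * F) * (A - B * F)) *ᵥ x = μ • x := by
    rw [mconj_mul_self_mulVec_congr (hagree x hKx) (hagree _ hKy), hx]
  exact (hF μ ((mem_spectrum_iff_exists_mulVec_eq_smul _ μ).2 ⟨x, hx0, hxF⟩)).not_ge hμ1

theorem stmt5 (n m : ℕ) (A : Matrix (Fin n) (Fin n) ℂ) (B : Matrix (Fin n) (Fin m) ℂ)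
    (R : Matrix (Fin m) (Fin m) ℂ) (H X : Matrix (Fin n) (Fin n) ℂ)
    (F : Matrix (Fin m) (Fin n) ℂ)
    (hR : R.IsHermitian) (hRu : IsUnit R) (hH : H.IsHermitian) (hX : X.IsHermitian)
    (hRx : IsUnit (Rx B R X))
    (hF : ∀ μ ∈ spectrum ℂ (mconj (A - B * F) * (A - B * F)), ‖μ‖ < 1)
    (hY : ∃ Y : Matrix (Fin n) (Fin n) ℂ, Y.PosSemidef ∧
      ((Y - (Tx A B R X)ᴴ * mconj Y * Tx A B R X) -
        (F - Fx A B R X)ᴴ * Rx B R X * (F - Fx A B R X)).PosSemidef)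
    (hRxpos : (Rx B R X).PosDef) :
    ∀ μ ∈ spectrum ℂ (mconj (Tx A B R X) * Tx A B R X), ‖μ‖ < 1 :=
  stmt5_general n m A B R X F hF hY hRxpos
end
end

section
/- If X is an eigenvector equation witness: M x = λ x with |λ| ≥ 1, Y Hermitian positive semidefinite, and Y − M^H Y M ≥ K₁ + K₂ with K₁, K₂ positive semidefinite, then x^H K₁ x = 0 and x^H K₂ x = 0, hence K₁ x = 0 and K₂ x = 0. -/
open Matrix
open scoped ComplexOrder

namespace Matrix

variable {ι 𝕜 : Type*} [Fintype ι]

theorem dotProduct_conjTranspose_mul_mul_mulVec_of_mulVec_eq_smul {R : Type*} [CommRing R]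
    [StarRing R] {M Y : Matrix ι ι R} {x : ι → R} {lam : R} (heig : M *ᵥ x = lam • x) :
    star x ⬝ᵥ (Mᴴ * Y * M) *ᵥ x = star lam * lam * (star x ⬝ᵥ Y *ᵥ x) := by
  rw [← mulVec_mulVec, ← mulVec_mulVec, dotProduct_mulVec, ← star_mulVec, heig, star_smul,
    smul_dotProduct, mulVec_smul, dotProduct_smul, smul_eq_mul, smul_eq_mul, mul_assoc]

variable [RCLike 𝕜]

theorem PosSemidef.dotProduct_sub_conjTranspose_mul_mul_mulVec_nonpos {M Y : Matrix ι ι 𝕜}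
    (hY : Y.PosSemidef) {x : ι → 𝕜} {lam : 𝕜} (hlam : 1 ≤ ‖lam‖) (heig : M *ᵥ x = lam • x) :
    star x ⬝ᵥ (Y - Mᴴ * Y * M) *ᵥ x ≤ 0 := by
  have hlam2 : (1 : 𝕜) ≤ star lam * lam := by
    rw [RCLike.star_def, RCLike.conj_mul, ← RCLike.ofReal_pow, ← RCLike.ofReal_one,
      RCLike.ofReal_le_ofReal]
    nlinarith
  rw [sub_mulVec, dotProduct_sub, dotProduct_conjTranspose_mul_mul_mulVec_of_mulVec_eq_smul heig,
    sub_nonpos]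
  exact le_mul_of_one_le_left (hY.dotProduct_mulVec_nonneg x) hlam2

end Matrix

theorem stmt6_general (n : ℕ) (M Y K₁ K₂ : Matrix (Fin n) (Fin n) ℂ)
    (x : Fin n → ℂ) (lam : ℂ) (hlam : 1 ≤ ‖lam‖)
    (heig : M.mulVec x = lam • x)
    (hY : Y.PosSemidef) (hK₁ : K₁.PosSemidef) (hK₂ : K₂.PosSemidef)
    (hineq : ((Y - Mᴴ * Y * M) - (K₁ + K₂)).PosSemidef) :
    star x ⬝ᵥ K₁.mulVec x = 0 ∧ star x ⬝ᵥ K₂.mulVec x = 0 ∧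
      K₁.mulVec x = 0 ∧ K₂.mulVec x = 0 := by
  have hc₁ := hK₁.dotProduct_mulVec_nonneg x
  have hc₂ := hK₂.dotProduct_mulVec_nonneg x
  have hsum : star x ⬝ᵥ K₁ *ᵥ x + star x ⬝ᵥ K₂ *ᵥ x ≤ 0 := by
    have hgap := hineq.dotProduct_mulVec_nonneg x
    rw [sub_mulVec, dotProduct_sub, add_mulVec, dotProduct_add, sub_nonneg] at hgap
    exact hgap.trans (hY.dotProduct_sub_conjTranspose_mul_mul_mulVec_nonpos hlam heig)
  obtain ⟨h₁, h₂⟩ :=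
    (add_eq_zero_iff_of_nonneg hc₁ hc₂).mp (le_antisymm hsum (add_nonneg hc₁ hc₂))
  exact ⟨h₁, h₂, (hK₁.dotProduct_mulVec_zero_iff x).mp h₁, (hK₂.dotProduct_mulVec_zero_iff x).mp h₂⟩

theorem stmt6 (n : ℕ) (M Y K₁ K₂ : Matrix (Fin n) (Fin n) ℂ)
    (x : Fin n → ℂ) (hx : x ≠ 0) (lam : ℂ) (hlam : 1 ≤ ‖lam‖)
    (heig : M.mulVec x = lam • x)
    (hY : Y.PosSemidef) (hK₁ : K₁.PosSemidef) (hK₂ : K₂.PosSemidef)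
    (hineq : ((Y - Mᴴ * Y * M) - (K₁ + K₂)).PosSemidef) :
    star x ⬝ᵥ K₁.mulVec x = 0 ∧ star x ⬝ᵥ K₂.mulVec x = 0 ∧
      K₁.mulVec x = 0 ∧ K₂.mulVec x = 0 :=
  stmt6_general n M Y K₁ K₂ x lam hlam heig hY hK₁ hK₂ hineq
end

section
/- In the scalar setting with a, g, h real parameters, g > 0, |a| > 0, h > −(1−|a|)²/g, the maximal root x_M = (−(1 − |a|² − g h) + √D)/(2g) of g x² + (1 − |a|² − g h)x − h = 0 satisfies |a|²/(1 + g x_M)² < 1, where D = (1 − |a|² − g h)² + 4 g h > 0. -/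
/-!
With `r = ‖a‖` and `b = 1 - r² - g h`, the discriminant factors as
`D = (g h + (1 - r)²) (g h + (1 + r)²)`, and the hypothesis on `h` says exactly that the first
factor is positive. Moreover `1 + g x_M = ((1 - r)² + g h + √D) / 2 + r > r ≥ 0`, so
`r² / (1 + g x_M)² < 1`.
-/

lemma discrim_riccati_eq_mul (r g h : ℝ) :
    discrim g (1 - r ^ 2 - g * h) (-h) = (g * h + (1 - r) ^ 2) * (g * h + (1 + r) ^ 2) := by
  rw [discrim]; ring

lemma discrim_riccati_pos {r g h : ℝ} (hr : 0 ≤ r) (hgh : 0 < g * h + (1 - r) ^ 2) :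
    0 < discrim g (1 - r ^ 2 - g * h) (-h) := by
  have hsq : (1 - r) ^ 2 ≤ (1 + r) ^ 2 := by nlinarith
  rw [discrim_riccati_eq_mul]
  exact mul_pos hgh (by linarith)

lemma quadratic_eq_zero_of_eq_root {a b c x : ℝ} (ha : a ≠ 0) (hd : 0 ≤ discrim a b c)
    (hx : x = (-b + √(discrim a b c)) / (2 * a)) : a * x ^ 2 + b * x + c = 0 := by
  have hs : discrim a b c = √(discrim a b c) * √(discrim a b c) := (Real.mul_self_sqrt hd).symm
  rw [sq, quadratic_eq_zero_iff ha hs]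
  exact Or.inl hx

lemma one_add_mul_riccati_root {r g h x : ℝ} (hg : g ≠ 0)
    (hx : x = (-(1 - r ^ 2 - g * h) + √(discrim g (1 - r ^ 2 - g * h) (-h))) / (2 * g)) :
    1 + g * x = (g * h + (1 - r) ^ 2 + √(discrim g (1 - r ^ 2 - g * h) (-h))) / 2 + r := by
  rw [hx]; field_simp; ring

lemma sq_div_sq_lt_one {r y : ℝ} (hr : 0 ≤ r) (hry : r < y) : r ^ 2 / y ^ 2 < 1 := by
  rw [div_lt_one (pow_pos (hr.trans_lt hry) 2)]
  exact pow_lt_pow_left₀ hry hr two_ne_zero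

theorem stmt16_general (a : ℂ) (g h D xM : ℝ) (hg : 0 < g)
    (hh : h > -(1 - ‖a‖) ^ 2 / g)
    (hD : D = (1 - ‖a‖ ^ 2 - g * h) ^ 2 + 4 * g * h)
    (hxM : xM = (-(1 - ‖a‖ ^ 2 - g * h) + Real.sqrt D) / (2 * g)) :
    0 < D ∧ g * xM ^ 2 + (1 - ‖a‖ ^ 2 - g * h) * xM - h = 0 ∧
      ‖a‖ ^ 2 / (1 + g * xM) ^ 2 < 1 := by
  have hgh : 0 < g * h + (1 - ‖a‖) ^ 2 := by
    rw [gt_iff_lt, div_lt_iff₀ hg] at hh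
    linarith
  have hdisc : D = discrim g (1 - ‖a‖ ^ 2 - g * h) (-h) := by rw [hD, discrim]; ring
  subst hdisc
  have hDpos := discrim_riccati_pos (norm_nonneg a) hgh
  refine ⟨hDpos, ?_, ?_⟩
  · simpa [sub_eq_add_neg] using quadratic_eq_zero_of_eq_root hg.ne' hDpos.le hxM
  · refine sq_div_sq_lt_one (norm_nonneg a) ?_
    rw [one_add_mul_riccati_root hg.ne' hxM]
    linarith [Real.sqrt_nonneg (discrim g (1 - ‖a‖ ^ 2 - g * h) (-h))]

theorem stmt16 (a : ℂ) (g h D xM : ℝ) (hg : 0 < g) (ha : 0 < ‖a‖)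
    (hh : h > -(1 - ‖a‖) ^ 2 / g)
    (hD : D = (1 - ‖a‖ ^ 2 - g * h) ^ 2 + 4 * g * h)
    (hxM : xM = (-(1 - ‖a‖ ^ 2 - g * h) + Real.sqrt D) / (2 * g)) :
    0 < D ∧ g * xM ^ 2 + (1 - ‖a‖ ^ 2 - g * h) * xM - h = 0 ∧
      ‖a‖ ^ 2 / (1 + g * xM) ^ 2 < 1 :=
  stmt16_general a g h D xM hg hh hD hxM
end

section
/- Semigroup/discrete-flow property of the FPI coefficient recursion: define on triples (A_k, G_k, H_k) with A_k ∈ ℂ^{n×n}, G_k, H_k Hermitian, the binary operation F((A_i,G_i,H_i),(A_j,G_j,H_j)) producing (A_j Δ A_i, G_j + A_j Δ G_i A_j^H, H_i + A_i^H H_j Δ A_i) with Δ = (I + G_i H_j)^{-1}. If X_{k+1} = F(X_k, X_0) with X_0 = (A, G, H), then the Hermitian matrix Y_{k+1} := H_k + A_k^H Y₀ (I + G_k Y₀)^{-1} A_k equals the (k+1)-fold composition R_d^{(k+1)}(Y₀) of the DARE operator R_d(Y) = A^H Y (I + G Y)^{-1} A + H, provided all inverses (I + G_i H_j)^{-1}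 and (I + G_k Y₀)^{-1} exist. -/
open Matrix

noncomputable section

variable {n : ℕ}

/-- The DARE operator `R_d(Y) = Aᴴ Y (I + G Y)⁻¹ A + H`. -/
def Rd (A G H Y : Matrix (Fin n) (Fin n) ℂ) : Matrix (Fin n) (Fin n) ℂ :=
  Aᴴ * Y * (1 + G * Y)⁻¹ * A + H

/-- The coefficient recursion `X_{k+1} = F(X_k, X_0)` of the fixed-point iteration:
`(A_{k+1}, G_{k+1}, H_{k+1}) = (A₀ Δ A_k, G₀ + A₀ Δ G_k A₀ᴴ, H_k + A_kᴴ H₀ Δ A_k)`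
with `Δ = (I + G_k H₀)⁻¹`. -/
def coefIter (A G H : Matrix (Fin n) (Fin n) ℂ) :
    ℕ → Matrix (Fin n) (Fin n) ℂ × Matrix (Fin n) (Fin n) ℂ × Matrix (Fin n) (Fin n) ℂ
  | 0 => (A, G, H)
  | k + 1 =>
    let p := coefIter A G H k
    (A * (1 + p.2.1 * H)⁻¹ * p.1,
     G + A * (1 + p.2.1 * H)⁻¹ * p.2.1 * Aᴴ,
     p.2.2 + p.1ᴴ * H * (1 + p.2.1 * H)⁻¹ * p.1)

namespace Stmt18Aux

lemma isUnit_comm' (X Z : Matrix (Fin n) (Fin n) ℂ) (h : IsUnit (1 + X * Z)) :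
    IsUnit (1 + Z * X) := by
  rw [Matrix.isUnit_iff_isUnit_det] at h ⊢
  rwa [Matrix.det_one_add_mul_comm] at h

/-- push-through identity -/
lemma push (X Z : Matrix (Fin n) (Fin n) ℂ) (h : IsUnit (1 + X * Z)) :
    X * (1 + Z * X)⁻¹ = (1 + X * Z)⁻¹ * X := by
  have h' : IsUnit (1 + Z * X) := isUnit_comm' X Z h
  calc X * (1 + Z * X)⁻¹
      = (1 + X * Z)⁻¹ * ((1 + X * Z) * (X * (1 + Z * X)⁻¹)) := by
        rw [← mul_assoc, Matrix.nonsing_inv_mul _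
          ((Matrix.isUnit_iff_isUnit_det _).1 h), one_mul]
    _ = (1 + X * Z)⁻¹ * (X * ((1 + Z * X) * (1 + Z * X)⁻¹)) := by
        have e : (1 + X * Z) * (X * (1 + Z * X)⁻¹)
            = X * ((1 + Z * X) * (1 + Z * X)⁻¹) := by
          rw [← mul_assoc, ← mul_assoc]
          congr 1
          noncomm_ring
        rw [e]
    _ = (1 + X * Z)⁻¹ * X := by
        rw [Matrix.mul_nonsing_inv _ ((Matrix.isUnit_iff_isUnit_det _).1 h'), mul_one]

/-- The key composition lemma (Sherman–Morrison–Woodbury computation). -/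
lemma key (A G H Gk Y : Matrix (Fin n) (Fin n) ℂ)
    (hGk : Gk.IsHermitian) (hH : H.IsHermitian)
    (hN : IsUnit (1 + Gk * H)) (hK : IsUnit (1 + G * Y))
    (hQ : IsUnit (1 + (G + A * (1 + Gk * H)⁻¹ * Gk * Aᴴ) * Y)) :
    IsUnit (1 + Gk * (Aᴴ * Y * (1 + G * Y)⁻¹ * A + H)) ∧
    (Aᴴ * Y * (1 + G * Y)⁻¹ * A + H) *
        (1 + Gk * (Aᴴ * Y * (1 + G * Y)⁻¹ * A + H))⁻¹
      = H * (1 + Gk * H)⁻¹ +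
        ((1 + Gk * H)⁻¹)ᴴ * Aᴴ * Y *
          (1 + (G + A * (1 + Gk * H)⁻¹ * Gk * Aᴴ) * Y)⁻¹ * A * (1 + Gk * H)⁻¹ := by
  set N : Matrix (Fin n) (Fin n) ℂ := 1 + Gk * H with hNdef
  set K : Matrix (Fin n) (Fin n) ℂ := 1 + G * Y with hKdef
  set Q : Matrix (Fin n) (Fin n) ℂ := 1 + (G + A * N⁻¹ * Gk * Aᴴ) * Y with hQdef
  have hNdet := (Matrix.isUnit_iff_isUnit_det _).1 hN
  have hKdet := (Matrix.isUnit_iff_isUnit_det _).1 hK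
  have hQdet := (Matrix.isUnit_iff_isUnit_det _).1 hQ
  have hKK : K * K⁻¹ = 1 := Matrix.mul_nonsing_inv _ hKdet
  have hKK' : K⁻¹ * K = 1 := Matrix.nonsing_inv_mul _ hKdet
  have hNN : N * N⁻¹ = 1 := Matrix.mul_nonsing_inv _ hNdet
  have hQQ : Q * Q⁻¹ = 1 := Matrix.mul_nonsing_inv _ hQdet
  set U : Matrix (Fin n) (Fin n) ℂ := N⁻¹ * Gk * Aᴴ * Y with hUdef
  set V : Matrix (Fin n) (Fin n) ℂ := K⁻¹ * A with hVdef
  -- 1 + V*U = K⁻¹ * Q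
  have h1 : K * (1 + V * U) = Q := by
    have e : K * (1 + V * U) = K + (K * K⁻¹) * (A * (N⁻¹ * Gk * Aᴴ * Y)) := by
      rw [hUdef, hVdef]; noncomm_ring
    rw [e, hKK, hKdef, hQdef]; noncomm_ring
  have h2 : (1 : Matrix (Fin n) (Fin n) ℂ) + V * U = K⁻¹ * Q := by
    have e := congrArg (fun X => K⁻¹ * X) h1
    simpa only [← mul_assoc, hKK', one_mul] using e
  have hVU : IsUnit ((1 : Matrix (Fin n) (Fin n) ℂ) + V * U) := by
    rw [Matrix.isUnit_iff_isUnit_det]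
    have e := congrArg Matrix.det h1
    rw [Matrix.det_mul] at e
    exact isUnit_of_mul_isUnit_right (e ▸ hQdet)
  have hVUdet := (Matrix.isUnit_iff_isUnit_det _).1 hVU
  have hUV : IsUnit ((1 : Matrix (Fin n) (Fin n) ℂ) + U * V) := isUnit_comm' V U hVU
  have hW : ((1 : Matrix (Fin n) (Fin n) ℂ) + V * U)⁻¹ = Q⁻¹ * K := by
    rw [h2, Matrix.mul_inv_rev, Matrix.nonsing_inv_nonsing_inv _ hKdet]
  have hM : 1 + Gk * (Aᴴ * Y * K⁻¹ * A + H) = N * (1 + U * V) := by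
    have e : N * (1 + U * V) = N + (N * N⁻¹) * (Gk * Aᴴ * Y * (K⁻¹ * A)) := by
      rw [hUdef, hVdef]; noncomm_ring
    rw [e, hNN, hNdef]; noncomm_ring
  constructor
  · rw [hM]; exact hN.mul hUV
  -- SMW
  have hw : ((1 : Matrix (Fin n) (Fin n) ℂ) + V * U) * (1 + V * U)⁻¹ = 1 :=
    Matrix.mul_nonsing_inv _ hVUdet
  have hw' : V * U * (1 + V * U)⁻¹ = 1 - (1 + V * U)⁻¹ := by
    have e : ((1 : Matrix (Fin n) (Fin n) ℂ) + V * U) * (1 + V * U)⁻¹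
        = (1 + V * U)⁻¹ + V * U * (1 + V * U)⁻¹ := by noncomm_ring
    rw [e] at hw
    exact eq_sub_of_add_eq' hw
  have hSMW : ((1 : Matrix (Fin n) (Fin n) ℂ) + U * V)⁻¹
      = 1 - U * (1 + V * U)⁻¹ * V := by
    apply Matrix.inv_eq_right_inv
    have e : ((1 : Matrix (Fin n) (Fin n) ℂ) + U * V) * (1 - U * (1 + V * U)⁻¹ * V)
        = 1 + U * V - U * (1 + V * U)⁻¹ * V - U * (V * U * (1 + V * U)⁻¹) * V := by
      noncomm_ring
    rw [e, hw']; noncomm_ring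
  have hMinv : (1 + Gk * (Aᴴ * Y * K⁻¹ * A + H))⁻¹
      = (1 - N⁻¹ * Gk * Aᴴ * Y * Q⁻¹ * A) * N⁻¹ := by
    rw [hM, Matrix.mul_inv_rev, hSMW, hW]
    have e : U * (Q⁻¹ * K) * V = N⁻¹ * Gk * Aᴴ * Y * Q⁻¹ * (K * K⁻¹) * A := by
      rw [hUdef, hVdef]; noncomm_ring
    rw [e, hKK]; noncomm_ring
  -- key scalar-like identity
  have e0 : A * (N⁻¹ * Gk * Aᴴ * Y) = Q - K := by
    rw [hQdef, hKdef]; noncomm_ring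
  have h3 : K⁻¹ * (A * (N⁻¹ * Gk * Aᴴ * Y)) = K⁻¹ * Q - 1 := by
    rw [e0, mul_sub, hKK']
  have hX : K⁻¹ * (A * (N⁻¹ * Gk * Aᴴ * Y)) * Q⁻¹ = K⁻¹ - Q⁻¹ := by
    rw [h3]
    have e : (K⁻¹ * Q - 1) * Q⁻¹ = K⁻¹ * (Q * Q⁻¹) - Q⁻¹ := by noncomm_ring
    rw [e, hQQ, mul_one]
  have hD : ((1 : Matrix (Fin n) (Fin n) ℂ) + H * Gk)⁻¹ = 1 - H * N⁻¹ * Gk := by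
    apply Matrix.inv_eq_right_inv
    have e : ((1 : Matrix (Fin n) (Fin n) ℂ) + H * Gk) * (1 - H * N⁻¹ * Gk)
        = 1 + H * Gk - H * ((1 + Gk * H) * N⁻¹) * Gk := by noncomm_ring
    rw [e, ← hNdef, hNN]; noncomm_ring
  have hDH : (N⁻¹)ᴴ = ((1 : Matrix (Fin n) (Fin n) ℂ) + H * Gk)⁻¹ := by
    rw [Matrix.conjTranspose_nonsing_inv]
    congr 1
    rw [hNdef]
    simp [Matrix.conjTranspose_add, Matrix.conjTranspose_mul, hGk.eq, hH.eq]
  rw [hMinv, hDH, hD]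
  have e : (Aᴴ * Y * K⁻¹ * A + H) * ((1 - N⁻¹ * Gk * Aᴴ * Y * Q⁻¹ * A) * N⁻¹)
      = H * N⁻¹ - H * N⁻¹ * Gk * Aᴴ * Y * Q⁻¹ * A * N⁻¹
        + Aᴴ * Y * K⁻¹ * A * N⁻¹
        - Aᴴ * Y * (K⁻¹ * (A * (N⁻¹ * Gk * Aᴴ * Y)) * Q⁻¹) * A * N⁻¹ := by
    noncomm_ring
  rw [e, hX]; noncomm_ring

/-- Hermitian preservation for the `G` component. -/
lemma hermG (A G H : Matrix (Fin n) (Fin n) ℂ)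
    (hG : G.IsHermitian) (hH : H.IsHermitian)
    (hinv₁ : ∀ k, IsUnit (1 + (coefIter A G H k).2.1 * H)) :
    ∀ k, ((coefIter A G H k).2.1).IsHermitian := by
  intro k
  induction k with
  | zero => exact hG
  | succ k ih =>
    have hu := hinv₁ k
    set Gk := (coefIter A G H k).2.1 with hGkdef
    show (G + A * (1 + Gk * H)⁻¹ * Gk * Aᴴ)ᴴ = G + A * (1 + Gk * H)⁻¹ * Gk * Aᴴ
    have hherm : ((1 + Gk * H)⁻¹)ᴴ = (1 + H * Gk)⁻¹ := by
      rw [Matrix.conjTranspose_nonsing_inv]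
      congr 1
      simp [Matrix.conjTranspose_add, Matrix.conjTranspose_mul, ih.eq, hH.eq]
    have e : (G + A * (1 + Gk * H)⁻¹ * Gk * Aᴴ)ᴴ
        = G + A * (Gk * (1 + H * Gk)⁻¹) * Aᴴ := by
      simp only [Matrix.conjTranspose_add, Matrix.conjTranspose_mul,
        Matrix.conjTranspose_conjTranspose, hG.eq, ih.eq, hherm]
      noncomm_ring
    rw [e, push Gk H hu]
    noncomm_ring

lemma main (A G H : Matrix (Fin n) (Fin n) ℂ)
    (hG : G.IsHermitian) (hH : H.IsHermitian)
    (hinv₁ : ∀ k, IsUnit (1 + (coefIter A G H k).2.1 * H)) :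
    ∀ k : ℕ, ∀ Y : Matrix (Fin n) (Fin n) ℂ,
      (∀ j, IsUnit (1 + (coefIter A G H j).2.1 * Y)) →
      (coefIter A G H k).2.2 +
        (coefIter A G H k).1ᴴ * Y * (1 + (coefIter A G H k).2.1 * Y)⁻¹ *
          (coefIter A G H k).1
      = (Rd A G H)^[k + 1] Y := by
  intro k
  induction k with
  | zero =>
    intro Y hY
    show H + Aᴴ * Y * (1 + G * Y)⁻¹ * A = (Rd A G H)^[1] Y
    rw [Function.iterate_one, Rd, add_comm]
  | succ k ih =>
    intro Y hY
    have hY0 : IsUnit (1 + G * Y) := hY 0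
    have hkey := key A G H (coefIter A G H k).2.1 Y
      (hermG A G H hG hH hinv₁ k) hH (hinv₁ k) hY0
      (by simpa only [coefIter] using hY (k + 1))
    set Y1 : Matrix (Fin n) (Fin n) ℂ := Aᴴ * Y * (1 + G * Y)⁻¹ * A + H with hY1
    have hunits : ∀ j, IsUnit (1 + (coefIter A G H j).2.1 * Y1) := by
      intro j
      exact (key A G H (coefIter A G H j).2.1 Y
        (hermG A G H hG hH hinv₁ j) hH (hinv₁ j) hY0
        (by simpa only [coefIter] using hY (j + 1))).1
    have hIH := ih Y1 hunits
    show (coefIter A G H k).2.2 +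
        (coefIter A G H k).1ᴴ * H * (1 + (coefIter A G H k).2.1 * H)⁻¹ *
          (coefIter A G H k).1 +
        (A * (1 + (coefIter A G H k).2.1 * H)⁻¹ * (coefIter A G H k).1)ᴴ * Y *
          (1 + (G + A * (1 + (coefIter A G H k).2.1 * H)⁻¹ * (coefIter A G H k).2.1 * Aᴴ)
            * Y)⁻¹ *
          (A * (1 + (coefIter A G H k).2.1 * H)⁻¹ * (coefIter A G H k).1)
      = (Rd A G H)^[k + 1 + 1] Y
    set B := (coefIter A G H k).1
    set Gk := (coefIter A G H k).2.1
    set Hk := (coefIter A G H k).2.2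
    have eL : Hk + Bᴴ * H * (1 + Gk * H)⁻¹ * B +
        (A * (1 + Gk * H)⁻¹ * B)ᴴ * Y *
          (1 + (G + A * (1 + Gk * H)⁻¹ * Gk * Aᴴ) * Y)⁻¹ *
          (A * (1 + Gk * H)⁻¹ * B)
      = Hk + Bᴴ * (H * (1 + Gk * H)⁻¹ +
          ((1 + Gk * H)⁻¹)ᴴ * Aᴴ * Y *
            (1 + (G + A * (1 + Gk * H)⁻¹ * Gk * Aᴴ) * Y)⁻¹ * A * (1 + Gk * H)⁻¹) * B := by
      simp only [Matrix.conjTranspose_mul]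
      noncomm_ring
    rw [eL, ← hkey.2]
    have eR : Hk + Bᴴ * (Y1 * (1 + Gk * Y1)⁻¹) * B
        = Hk + Bᴴ * Y1 * (1 + Gk * Y1)⁻¹ * B := by noncomm_ring
    rw [eR, hIH]
    rw [Function.iterate_succ_apply (Rd A G H) (k + 1) Y]
    rfl

end Stmt18Aux

theorem stmt18 (n : ℕ) (A G H Y₀ : Matrix (Fin n) (Fin n) ℂ)
    (hG : G.IsHermitian) (hH : H.IsHermitian) (hY₀ : Y₀.IsHermitian)
    (hinv₁ : ∀ k, IsUnit (1 + (coefIter A G H k).2.1 * H))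
    (hinv₂ : ∀ k, IsUnit (1 + (coefIter A G H k).2.1 * Y₀)) :
    ∀ k : ℕ,
      (coefIter A G H k).2.2 +
        (coefIter A G H k).1ᴴ * Y₀ * (1 + (coefIter A G H k).2.1 * Y₀)⁻¹ *
          (coefIter A G H k).1
      = (Rd A G H)^[k + 1] Y₀ := by
  intro k
  exact Stmt18Aux.main A G H hG hH hinv₁ k Y₀ hinv₂
end
end
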